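/- Simultaneous diagonalization forces a monomial matrix: let n ≥ 1, let A be an invertible n×n real matrix, and let D₁, D₂ be diagonal n×n real matrices with strictly positive diagonal entries such that the ratios (D₁)_{ii}/(D₂)_{ii}, i = 1,…,n, are pairwise distinct. If both A·D₁·Aᵀ and A·D₂·Aᵀ are diagonal matrices, then A is a monomial matrix, i.e., A has exactly one nonzero entry in each row and each column. -/
import Mathlib


/-- A monomial (scaling-permutation) matrix: exactly one nonzero entry in each row
and in each column. -/
def IsMonomial {n : ℕ} (A : Matrix (Fin n) (Fin n) ℝ) : Prop :=
  (∀ i, ∃! j, A i j ≠ 0) ∧ (∀ j, ∃! i, A i j ≠ 0)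

/-- Simultaneous diagonalization forces a monomial matrix: if `A` is invertible,
`D₁, D₂` are diagonal with positive entries whose ratios are pairwise distinct, and
both `A D₁ Aᵀ` and `A D₂ Aᵀ` are diagonal, then `A` is monomial. -/
theorem simultaneous_diagonalization_monomial
    (n : ℕ) (hn : 1 ≤ n)
    (A : Matrix (Fin n) (Fin n) ℝ) (hA : IsUnit A.det)
    (d₁ d₂ : Fin n → ℝ) (hd₁ : ∀ i, 0 < d₁ i) (hd₂ : ∀ i, 0 < d₂ i)
    (hdist : ∀ i j : Fin n, i ≠ j → d₁ i / d₂ i ≠ d₁ j / d₂ j)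
    (h1 : (A * Matrix.diagonal d₁ * A.transpose).IsDiag)
    (h2 : (A * Matrix.diagonal d₂ * A.transpose).IsDiag) :
    IsMonomial A := by
  classical
  have hAinv : Invertible A := A.invertibleOfIsUnitDet hA
  have hAinj : Function.Injective A.mulVec := A.mulVec_injective_of_invertible
  -- entry formulas
  have hBent : ∀ i j, (A * Matrix.diagonal d₁ * A.transpose) i j
      = ∑ k, A i k * d₁ k * A j k := by
    intro i j
    rw [Matrix.mul_apply]
    simp only [Matrix.mul_diagonal, Matrix.transpose_apply]
  have hCent : ∀ i j, (A * Matrix.diagonal d₂ * A.transpose) i j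
      = ∑ k, A i k * d₂ k * A j k := by
    intro i j
    rw [Matrix.mul_apply]
    simp only [Matrix.mul_diagonal, Matrix.transpose_apply]
  set b : Fin n → ℝ := fun i => ∑ k, A i k * d₁ k * A i k with hb
  set c : Fin n → ℝ := fun i => ∑ k, A i k * d₂ k * A i k with hc
  -- each row is nonzero
  have hrow : ∀ i, ∃ k, A i k ≠ 0 := by
    intro i
    by_contra h
    push_neg at h
    exact hA.ne_zero (Matrix.det_eq_zero_of_row_eq_zero i h)
  have hcpos : ∀ i, 0 < c i := by
    intro i
    obtain ⟨k, hk⟩ := hrow i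
    apply Finset.sum_pos'
    · intro m _
      nlinarith [(hd₂ m).le, mul_self_nonneg (A i m)]
    · refine ⟨k, Finset.mem_univ k, ?_⟩
      have h1 : 0 < A i k * A i k := mul_self_pos.mpr hk
      nlinarith [hd₂ k]
  -- key: nonzero entry in row i pins down the ratio
  have key : ∀ i k, A i k ≠ 0 → d₁ k * c i = d₂ k * b i := by
    intro i k hk
    set w : Fin n → ℝ := fun m => A i m * (d₁ m * c i - d₂ m * b i) with hw
    have hmv : A.mulVec w = A.mulVec 0 := by
      rw [Matrix.mulVec_zero]
      funext j
      simp only [Matrix.mulVec, dotProduct, hw, Pi.zero_apply]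
      have hsplit : ∑ m, A j m * (A i m * (d₁ m * c i - d₂ m * b i))
          = (∑ m, A j m * d₁ m * A i m) * c i - (∑ m, A j m * d₂ m * A i m) * b i := by
        rw [Finset.sum_mul, Finset.sum_mul, ← Finset.sum_sub_distrib]
        exact Finset.sum_congr rfl fun m _ => by ring
      rw [hsplit]
      by_cases hji : j = i
      · subst hji
        have e1 : (∑ m, A j m * d₁ m * A j m) = b j := rfl
        have e2 : (∑ m, A j m * d₂ m * A j m) = c j := rfl
        rw [e1, e2]; ring
      · have e1 : (∑ m, A j m * d₁ m * A i m) = 0 := by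
          rw [← hBent j i]; exact h1 hji
        have e2 : (∑ m, A j m * d₂ m * A i m) = 0 := by
          rw [← hCent j i]; exact h2 hji
        rw [e1, e2]; ring
    have hw0 : w = 0 := hAinj hmv
    have := congrFun hw0 k
    simp only [hw, Pi.zero_apply] at this
    have hz : d₁ k * c i - d₂ k * b i = 0 := by
      rcases mul_eq_zero.mp this with h | h
      · exact absurd h hk
      · exact h
    linarith
  -- unique nonzero entry in each row
  have rowEU : ∀ i, ∃! k, A i k ≠ 0 := by
    intro i
    obtain ⟨k, hk⟩ := hrow i
    refine ⟨k, hk, ?_⟩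
    intro k' hk'
    by_contra hne
    apply hdist k' k hne
    have e1 := key i k hk
    have e2 := key i k' hk'
    have hci := hcpos i
    rw [div_eq_div_iff (ne_of_gt (hd₂ k')) (ne_of_gt (hd₂ k))]
    have hci' : c i ≠ 0 := ne_of_gt hci
    have h3 : d₁ k' * d₂ k * c i = d₁ k * d₂ k' * c i := by linear_combination d₂ k * e2 - d₂ k' * e1
    exact mul_right_cancel₀ hci' h3
  refine ⟨rowEU, ?_⟩
  -- columns
  intro j
  have hcol : ∃ i, A i j ≠ 0 := by
    by_contra h
    push_neg at h
    exact hA.ne_zero (Matrix.det_eq_zero_of_column_eq_zero j h)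
  obtain ⟨i, hi⟩ := hcol
  refine ⟨i, hi, ?_⟩
  intro i' hi'
  by_contra hne
  -- off-diagonal entry of A D₂ Aᵀ at (i', i) is nonzero
  have hz : (∑ k, A i' k * d₂ k * A i k) = 0 := by
    rw [← hCent i' i]; exact h2 hne
  have hsum : (∑ k, A i' k * d₂ k * A i k) = A i' j * d₂ j * A i j := by
    rw [Finset.sum_eq_single j]
    · intro m _ hm
      obtain ⟨k₀, hk₀, huniq⟩ := rowEU i'
      have hj : j = k₀ := huniq j hi'
      have : A i' m = 0 := by
        by_contra hAm
        exact hm ((huniq m hAm).trans hj.symm)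
      rw [this]; ring
    · intro h; exact absurd (Finset.mem_univ j) h
  rw [hsum] at hz
  have : A i' j * d₂ j * A i j ≠ 0 :=
    mul_ne_zero (mul_ne_zero hi' (ne_of_gt (hd₂ j))) hi
  exact this hz
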